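/- arXiv:2309.16016 — 2 statements merged into one kernel-verified Lean document; each statement's English description precedes it below -/
import Mathlib

section
/- Let G be an m-distance-regular graph. Then the collection of m-distance matrices {A_ℓ : ℓ ∈ D}, where D is the set of all m-distances realized in G, forms a symmetric association scheme: A_o = I, the matrices are symmetric, they sum to the all-ones matrix J, and products satisfy the Bose–Mesner relations A_a A_b = Σ_{ℓ∈D} p_{ab}^ℓ A_ℓ. -/
open Matrix

/-- A walk in an edge-colored graph: `CWalk Γ x y cs` means there is a walk from
`x` to `y` whose successive edges have the colors listed in `cs`. -/
inductive CWalk {m : ℕ} {X : Type*} (Γ : Fin m → X → X → Prop) : X → X → List (Fin m) → Prop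
  | nil (x : X) : CWalk Γ x x []
  | cons {x y z : X} {i : Fin m} {cs : List (Fin m)} :
      Γ i x y → CWalk Γ y z cs → CWalk Γ x z (i :: cs)

/-- The `m`-length of a walk type: the vector counting edges of each color. -/
def mlen {m : ℕ} (cs : List (Fin m)) : Fin m → ℕ := fun i => cs.count i

/-- The set of `m`-lengths of walks between `x` and `y`. -/
def walkLengths {m : ℕ} {X : Type*} (Γ : Fin m → X → X → Prop) (x y : X) :
    Set (Fin m → ℕ) := {ℓ | ∃ cs, CWalk Γ x y cs ∧ mlen cs = ℓ}


/-- The `i`-th standard basis tuple `e_i` of `ℕ^m`. -/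
def eVec {m : ℕ} (i : Fin m) : Fin m → ℕ := Pi.single i 1

/-- The `ℓ`-th `m`-distance matrix of a graph with `m`-distance function `d`. -/
def mdistMatrix {m : ℕ} {X : Type*} [DecidableEq X] [Fintype X]
    (d : X → X → (Fin m → ℕ)) (ℓ : Fin m → ℕ) : Matrix X X ℝ :=
  Matrix.of fun x y => if d x y = ℓ then (1 : ℝ) else 0

/-!
An `m`-distance is the minimum of a monomial order, under which `0` is the least element:
anything below `0` would give, after translating, a strictly decreasing sequence `n • a`.
Hence `d x y = 0` exactly when `x = y`, and `d` is symmetric because reversing a walk keeps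
its colour counts. Every entry of `A_a A_b` at `(x, y)` counts the vertices `z` with
`d x z = a` and `d z y = b`, which is `p_{ab}^{d x y}`; and at `(x, y)` exactly one `A_ℓ`,
`ℓ ∈ D`, has a nonzero entry, namely `A_{d x y}`.
-/

namespace CWalk

variable {m : ℕ} {X : Type*} {Γ : Fin m → X → X → Prop}

theorem append {x y z : X} {cs ds : List (Fin m)} (h₁ : CWalk Γ x y cs)
    (h₂ : CWalk Γ y z ds) : CWalk Γ x z (cs ++ ds) := by
  induction h₁ with
  | nil => simpa using h₂
  | cons h _ ih => exact cons h (ih h₂)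

theorem reverse (hsymm : ∀ i (x y : X), Γ i x y → Γ i y x) {x y : X} {cs : List (Fin m)}
    (h : CWalk Γ x y cs) : CWalk Γ y x cs.reverse := by
  induction h with
  | nil => exact nil _
  | cons h _ ih => simpa using ih.append (cons (hsymm _ _ _ h) (nil _))

theorem eq_of_mlen_eq_zero {x y : X} {cs : List (Fin m)} (h : CWalk Γ x y cs)
    (hcs : mlen cs = 0) : x = y := by
  cases cs with
  | nil => cases h; rfl
  | cons i _ => simpa [mlen] using congrFun hcs i

end CWalk

theorem mlen_nil {m : ℕ} : mlen ([] : List (Fin m)) = 0 := rfl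

theorem mlen_reverse {m : ℕ} (cs : List (Fin m)) : mlen cs.reverse = mlen cs := by
  funext i
  simp [mlen]

theorem zero_mem_walkLengths_self {m : ℕ} {X : Type*} (Γ : Fin m → X → X → Prop) (x : X) :
    0 ∈ walkLengths Γ x x :=
  ⟨[], CWalk.nil x, mlen_nil⟩

theorem walkLengths_comm {m : ℕ} {X : Type*} {Γ : Fin m → X → X → Prop}
    (hsymm : ∀ i (x y : X), Γ i x y → Γ i y x) (x y : X) :
    walkLengths Γ x y = walkLengths Γ y x := by
  ext ℓ
  constructor <;> rintro ⟨cs, hw, rfl⟩ <;> exact ⟨cs.reverse, hw.reverse hsymm, mlen_reverse cs⟩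

section MonomialOrder

variable {M : Type*} [AddCancelCommMonoid M] {le : M → M → Prop}

theorem eq_zero_of_le_zero_of_translation_invariant (hantisymm : ∀ a b, le a b → le b a → a = b)
    (hadd : ∀ u v w : M, le u v → le (w + u) (w + v))
    (hwell : ∀ S : Set M, S.Nonempty → ∃ a ∈ S, ∀ b ∈ S, le a b) {a : M} (ha : le a 0) :
    a = 0 := by
  obtain ⟨_, ⟨n, rfl⟩, hmin⟩ := hwell (Set.range fun n : ℕ => n • a) ⟨a, 1, one_smul _ _⟩
  have hsucc_le : le ((n + 1) • a) (n • a) := by simpa [succ_nsmul] using hadd a 0 (n • a) ha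
  have hsucc_eq : (n + 1) • a = n • a := hantisymm _ _ hsucc_le (hmin _ ⟨n + 1, rfl⟩)
  rw [succ_nsmul] at hsucc_eq
  exact add_eq_left.mp hsucc_eq

theorem zero_le_of_translation_invariant (hrefl : ∀ a, le a a)
    (hantisymm : ∀ a b, le a b → le b a → a = b) (htotal : ∀ a b, le a b ∨ le b a)
    (hadd : ∀ u v w : M, le u v → le (w + u) (w + v))
    (hwell : ∀ S : Set M, S.Nonempty → ∃ a ∈ S, ∀ b ∈ S, le a b) (a : M) : le 0 a := by
  rcases htotal 0 a with h | h
  · exact h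
  · rw [eq_zero_of_le_zero_of_translation_invariant hantisymm hadd hwell h]
    exact hrefl 0

end MonomialOrder

section MDistance

variable {m : ℕ} {X : Type*} {Γ : Fin m → X → X → Prop} {le : (Fin m → ℕ) → (Fin m → ℕ) → Prop}
  {d : X → X → (Fin m → ℕ)}

theorem mdist_self (hantisymm : ∀ a b, le a b → le b a → a = b) (hzero_le : ∀ a, le 0 a)
    (hd : ∀ x y, d x y ∈ walkLengths Γ x y ∧ ∀ ℓ ∈ walkLengths Γ x y, le (d x y) ℓ) (x : X) :
    d x x = 0 :=
  hantisymm _ _ ((hd x x).2 0 (zero_mem_walkLengths_self Γ x)) (hzero_le _)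

theorem eq_of_mdist_eq_zero (hd : ∀ x y, d x y ∈ walkLengths Γ x y) {x y : X}
    (h : d x y = 0) : x = y := by
  obtain ⟨cs, hw, hlen⟩ := hd x y
  exact hw.eq_of_mlen_eq_zero (hlen.trans h)

theorem mdist_comm (hsymm : ∀ i (x y : X), Γ i x y → Γ i y x)
    (hantisymm : ∀ a b, le a b → le b a → a = b)
    (hd : ∀ x y, d x y ∈ walkLengths Γ x y ∧ ∀ ℓ ∈ walkLengths Γ x y, le (d x y) ℓ) (x y : X) :
    d x y = d y x :=
  hantisymm _ _ ((hd x y).2 _ (walkLengths_comm hsymm x y ▸ (hd y x).1))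
    ((hd y x).2 _ (walkLengths_comm hsymm y x ▸ (hd x y).1))

end MDistance

section MDistMatrix

variable {m : ℕ} {X : Type*} [DecidableEq X] [Fintype X] {d : X → X → (Fin m → ℕ)}

theorem mdistMatrix_zero (hd : ∀ x y, d x y = 0 ↔ x = y) : mdistMatrix d 0 = 1 := by
  ext x y
  simp [mdistMatrix, Matrix.one_apply, hd]

theorem mdistMatrix_transpose (hd : ∀ x y, d x y = d y x) (ℓ : Fin m → ℕ) :
    (mdistMatrix d ℓ)ᵀ = mdistMatrix d ℓ := by
  ext x y
  simp [mdistMatrix, hd x y]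

theorem sum_mdistMatrix_apply {D : Finset (Fin m → ℕ)} (hD : ∀ x y, d x y ∈ D)
    (c : (Fin m → ℕ) → ℝ) (x y : X) :
    (∑ ℓ ∈ D, c ℓ • mdistMatrix d ℓ) x y = c (d x y) := by
  simp [Matrix.sum_apply, mdistMatrix, hD x y]

theorem mdistMatrix_mul_apply (a b : Fin m → ℕ) (x y : X) :
    (mdistMatrix d a * mdistMatrix d b) x y
      = (Finset.univ.filter fun z => d x z = a ∧ d z y = b).card := by
  simp only [Matrix.mul_apply, mdistMatrix, Matrix.of_apply, mul_ite, mul_one, mul_zero,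
    ← ite_and, and_comm, Finset.sum_boole]

end MDistMatrix

theorem mdistanceRegular_assocScheme_general {m : ℕ} {X : Type*} [DecidableEq X] [Fintype X]
    (Γ : Fin m → X → X → Prop)
    (hsymmG : ∀ i (x y : X), Γ i x y → Γ i y x)
    (le : (Fin m → ℕ) → (Fin m → ℕ) → Prop)
    (hrefl : ∀ a, le a a)
    (hantisymm : ∀ a b, le a b → le b a → a = b)
    (htotal : ∀ a b, le a b ∨ le b a)
    (hadd : ∀ u v w : Fin m → ℕ, le u v → le (w + u) (w + v))
    (hwell : ∀ S : Set (Fin m → ℕ), S.Nonempty → ∃ a ∈ S, ∀ b ∈ S, le a b)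
    (d : X → X → (Fin m → ℕ))
    (hd : ∀ x y, d x y ∈ walkLengths Γ x y ∧ ∀ ℓ ∈ walkLengths Γ x y, le (d x y) ℓ)
    (p : (Fin m → ℕ) → (Fin m → ℕ) → (Fin m → ℕ) → ℕ)
    (hp : ∀ a b (x y : X),
      (Finset.univ.filter fun z => d x z = a ∧ d z y = b).card = p a b (d x y))
    (D : Finset (Fin m → ℕ))
    (hD : ∀ ℓ, ℓ ∈ D ↔ ∃ x y : X, d x y = ℓ) :
    mdistMatrix d 0 = (1 : Matrix X X ℝ) ∧
    (∀ ℓ, (mdistMatrix d ℓ)ᵀ = mdistMatrix d ℓ) ∧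
    (∑ ℓ ∈ D, mdistMatrix d ℓ) = Matrix.of (fun _ _ => (1 : ℝ)) ∧
    (∀ a b, mdistMatrix d a * mdistMatrix d b
      = ∑ ℓ ∈ D, (p a b ℓ : ℝ) • mdistMatrix d ℓ) := by
  have hzero_le := zero_le_of_translation_invariant hrefl hantisymm htotal hadd hwell
  have hmem : ∀ x y, d x y ∈ D := fun x y => (hD _).2 ⟨x, y, rfl⟩
  refine ⟨mdistMatrix_zero fun x y => ⟨eq_of_mdist_eq_zero (fun x y => (hd x y).1), ?_⟩,
    mdistMatrix_transpose (mdist_comm hsymmG hantisymm hd), ?_, fun a b => ?_⟩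
  · rintro rfl
    exact mdist_self hantisymm hzero_le hd x
  · ext x y
    simpa using sum_mdistMatrix_apply hmem (fun _ => 1) x y
  · ext x y
    rw [mdistMatrix_mul_apply, hp, sum_mdistMatrix_apply hmem]

/-- The `m`-distance matrices of an `m`-distance-regular graph form a symmetric
association scheme: `A_o` is the identity, the matrices are symmetric, they sum to
the all-ones matrix, and they satisfy the Bose–Mesner relations
`A_a A_b = Σ_{ℓ ∈ D} p_{ab}^ℓ A_ℓ`. -/
theorem mdistanceRegular_assocScheme {m : ℕ} {X : Type*} [DecidableEq X] [Fintype X]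
    (Γ : Fin m → X → X → Prop)
    (hsymmG : ∀ i (x y : X), Γ i x y → Γ i y x)
    (le : (Fin m → ℕ) → (Fin m → ℕ) → Prop)
    (hrefl : ∀ a, le a a)
    (hantisymm : ∀ a b, le a b → le b a → a = b)
    (htrans : ∀ a b c, le a b → le b c → le a c)
    (htotal : ∀ a b, le a b ∨ le b a)
    (hadd : ∀ u v w : Fin m → ℕ, le u v → le (w + u) (w + v))
    (hwell : ∀ S : Set (Fin m → ℕ), S.Nonempty → ∃ a ∈ S, ∀ b ∈ S, le a b)
    (d : X → X → (Fin m → ℕ))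
    (hd : ∀ x y, d x y ∈ walkLengths Γ x y ∧ ∀ ℓ ∈ walkLengths Γ x y, le (d x y) ℓ)
    (hE : ∀ i : Fin m, ∃ x y : X, d x y = eVec i)
    (p : (Fin m → ℕ) → (Fin m → ℕ) → (Fin m → ℕ) → ℕ)
    (hp : ∀ a b (x y : X),
      (Finset.univ.filter fun z => d x z = a ∧ d z y = b).card = p a b (d x y))
    (D : Finset (Fin m → ℕ))
    (hD : ∀ ℓ, ℓ ∈ D ↔ ∃ x y : X, d x y = ℓ) :
    mdistMatrix d 0 = (1 : Matrix X X ℝ) ∧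
    (∀ ℓ, (mdistMatrix d ℓ)ᵀ = mdistMatrix d ℓ) ∧
    (∑ ℓ ∈ D, mdistMatrix d ℓ) = Matrix.of (fun _ _ => (1 : ℝ)) ∧
    (∀ a b, mdistMatrix d a * mdistMatrix d b
      = ∑ ℓ ∈ D, (p a b ℓ : ℝ) • mdistMatrix d ℓ) :=
  mdistanceRegular_assocScheme_general Γ hsymmG le hrefl hantisymm htotal hadd hwell d hd p hp D hD
end

section
/- Let G_1, ..., G_m be distance-regular graphs with intersection numbers p^{G_i,c}_{a b}. In the Cartesian product G = G_1 □ ⋯ □ G_m with edges colored by the factor they come from, the m-distance between x = (x_1,...,x_m) and y = (y_1,...,y_m) with respect to any monomial order equals the tuple (d(x_1,y_1), ..., d(x_m,y_m)) of graph distances in the factors, and the number of vertices z at m-distance a from x and b from y equals ∏_{i=1}^m p^{G_i, c_i}_{a_i b_i} where c = d_m(x,y); hence G is m-distance-regular. -/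
/-- The edge-coloring of the Cartesian product `G_1 □ ⋯ □ G_m`: an edge has color `i`
when it comes from the factor `G_i`. -/
def boxProdColoring {m : ℕ} {X : Fin m → Type*} (G : ∀ i, SimpleGraph (X i)) :
    Fin m → (∀ i, X i) → (∀ i, X i) → Prop :=
  fun i x y => (G i).Adj (x i) (y i) ∧ ∀ j, j ≠ i → x j = y j

/-- The tuple of coordinatewise graph distances in a product of graphs. -/
noncomputable def dvec {m : ℕ} {X : Fin m → Type*} (G : ∀ i, SimpleGraph (X i))
    (x y : ∀ i, X i) : Fin m → ℕ := fun i => (G i).dist (x i) (y i)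

section aux
variable {m : ℕ} {X : Fin m → Type*} [∀ i, DecidableEq (X i)] (G : ∀ i, SimpleGraph (X i))

lemma cwalk_append {Y : Type*} {Γ : Fin m → Y → Y → Prop} {x y z : Y}
    {cs ds : List (Fin m)} (h1 : CWalk Γ x y cs) (h2 : CWalk Γ y z ds) :
    CWalk Γ x z (cs ++ ds) := by
  induction h1 with
  | nil => simpa
  | cons hstep _ ih => exact CWalk.cons hstep (ih h2)

lemma cwalk_single {i : Fin m} {u v : X i} (w : (G i).Walk u v) (x : ∀ j, X j)
    (hx : x i = u) :
    CWalk (boxProdColoring G) x (Function.update x i v) (List.replicate w.length i) := by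
  induction w generalizing x with
  | nil =>
    subst hx
    simpa using CWalk.nil x
  | @cons a b c hab w ih =>
    simp only [SimpleGraph.Walk.length_cons, List.replicate_succ]
    refine CWalk.cons (y := Function.update x i b) (i := i) ?_ ?_
    · refine ⟨?_, ?_⟩
      · rw [hx]; simpa using hab
      · intro j hj; rw [Function.update_of_ne hj]
    · have := ih (Function.update x i b) (Function.update_self i b x)
      rwa [Function.update_idem] at this


set_option linter.unusedSectionVars false

/-- Projection of a colored walk to coordinate `i` is a walk in `G i`. -/
lemma cwalk_proj {x y : ∀ j, X j} {cs : List (Fin m)}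
    (h : CWalk (boxProdColoring G) x y cs) (i : Fin m) :
    ∃ w : (G i).Walk (x i) (y i), w.length = cs.count i := by
  induction h with
  | nil x => exact ⟨SimpleGraph.Walk.nil, by simp⟩
  | @cons x y z j cs hstep _ ih =>
    obtain ⟨w, hw⟩ := ih
    by_cases hji : j = i
    · subst hji
      refine ⟨SimpleGraph.Walk.cons hstep.1 w, ?_⟩
      simp [hw, List.count_cons]
    · have hxy : x i = y i := hstep.2 i (fun h => hji h.symm)
      refine ⟨w.copy hxy.symm rfl, ?_⟩
      simp [hw, List.count_cons, hji]

/-- Existence of a walk realizing coordinatewise distances on a list of coordinates. -/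
lemma cwalk_exists (hconn : ∀ i, (G i).Connected) :
    ∀ (l : List (Fin m)) (x y : ∀ j, X j), (∀ i, i ∉ l → x i = y i) →
    ∃ cs, CWalk (boxProdColoring G) x y cs ∧
      ∀ i, cs.count i = (G i).dist (x i) (y i) := by
  intro l
  induction l with
  | nil =>
    intro x y hxy
    have : x = y := funext fun i => hxy i List.not_mem_nil
    subst this
    exact ⟨[], CWalk.nil x, fun i => by simp [SimpleGraph.dist_self]⟩
  | cons i l ih =>
    intro x y hxy
    obtain ⟨w, hw⟩ := ((hconn i) (x i) (y i)).exists_walk_length_eq_dist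
    set y' := Function.update x i (y i) with hy'
    have h1 := cwalk_single G w x rfl
    have hy'i : y' i = y i := Function.update_self i (y i) x
    obtain ⟨cs, hcs, hcnt⟩ := ih y' y (by
      intro j hj
      by_cases hji : j = i
      · subst hji; exact hy'i
      · rw [hy', Function.update_of_ne hji]
        exact hxy j (by simp [hji, hj]))
    refine ⟨List.replicate w.length i ++ cs, cwalk_append h1 hcs, ?_⟩
    intro j
    rw [List.count_append, List.count_replicate]
    by_cases hji : j = i
    · subst hji
      have : cs.count j = 0 := by rw [hcnt j, hy'i, SimpleGraph.dist_self]
      simp [this, hw]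
    · have hthis : y' j = x j := Function.update_of_ne hji _ _
      have hij : i ≠ j := fun h => hji h.symm
      simp [hij, hcnt j, hthis]

lemma le_zero_min (le : (Fin m → ℕ) → (Fin m → ℕ) → Prop)
    (hantisymm : ∀ a b, le a b → le b a → a = b)
    (hadd : ∀ u v w : Fin m → ℕ, le u v → le (w + u) (w + v))
    (hwell : ∀ S : Set (Fin m → ℕ), S.Nonempty → ∃ a ∈ S, ∀ b ∈ S, le a b) :
    ∀ w, le 0 w := by
  obtain ⟨a0, -, ha0⟩ := hwell Set.univ ⟨0, trivial⟩
  have h1 : le (a0 + a0) a0 := by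
    have := hadd a0 0 a0 (ha0 0 trivial)
    simpa using this
  have h3 : a0 = a0 + a0 := hantisymm _ _ (ha0 _ trivial) h1
  have h4 : a0 = 0 := by
    funext i
    have h := congrFun h3 i
    simp only [Pi.add_apply] at h
    have : a0 i = 0 := by omega
    simp [this]
  intro w; rw [← h4]; exact ha0 w trivial

end aux

/-- In the Cartesian product of distance-regular graphs `G_1, …, G_m`, with edges
colored by the factor they come from: for any monomial order, the `m`-distance of
`x` and `y` is the tuple of coordinatewise graph distances; each `e_i` is a realized
`m`-distance; and the number of vertices `z` at `m`-distance `a` from `x` and `b`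
from `y` equals `∏_i p^{G_i, c_i}_{a_i b_i}` where `c = d_m(x,y)`. Hence the product
is `m`-distance-regular. -/
theorem boxProd_mdistanceRegular {m : ℕ} {X : Fin m → Type*}
    [∀ i, Fintype (X i)] [∀ i, DecidableEq (X i)]
    (G : ∀ i, SimpleGraph (X i))
    (hconn : ∀ i, (G i).Connected)
    (hedge : ∀ i, ∃ u v : X i, (G i).Adj u v)
    (p : ∀ _ : Fin m, ℕ → ℕ → ℕ → ℕ)
    (hdrg : ∀ i (a b : ℕ) (x y : X i),
      (Finset.univ.filter fun z => (G i).dist x z = a ∧ (G i).dist z y = b).card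
        = p i a b ((G i).dist x y))
    (le : (Fin m → ℕ) → (Fin m → ℕ) → Prop)
    (hrefl : ∀ a, le a a)
    (hantisymm : ∀ a b, le a b → le b a → a = b)
    (htrans : ∀ a b c, le a b → le b c → le a c)
    (htotal : ∀ a b, le a b ∨ le b a)
    (hadd : ∀ u v w : Fin m → ℕ, le u v → le (w + u) (w + v))
    (hwell : ∀ S : Set (Fin m → ℕ), S.Nonempty → ∃ a ∈ S, ∀ b ∈ S, le a b) :
    (∀ x y : ∀ i, X i,
      dvec G x y ∈ walkLengths (boxProdColoring G) x y ∧
      ∀ ℓ ∈ walkLengths (boxProdColoring G) x y, le (dvec G x y) ℓ) ∧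
    (∀ i : Fin m, ∃ x y : ∀ i, X i, dvec G x y = eVec i) ∧
    (∀ (a b : Fin m → ℕ) (x y : ∀ i, X i),
      (Finset.univ.filter fun z => dvec G x z = a ∧ dvec G z y = b).card
        = ∏ i : Fin m, p i (a i) (b i) (dvec G x y i)) := by
  have hzero := le_zero_min le hantisymm hadd hwell
  refine ⟨?_, ?_, ?_⟩
  · intro x y
    constructor
    · obtain ⟨cs, hcs, hcnt⟩ := cwalk_exists G hconn (List.finRange m) x y
        (fun i hi => absurd (List.mem_finRange i) hi)
      exact ⟨cs, hcs, funext fun i => hcnt i⟩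
    · rintro ℓ ⟨cs, hcs, rfl⟩
      have hle : ∀ i, dvec G x y i ≤ mlen cs i := by
        intro i
        obtain ⟨w, hw⟩ := cwalk_proj G hcs i
        calc dvec G x y i ≤ w.length := SimpleGraph.dist_le w
          _ = mlen cs i := hw
      have heq : mlen cs = dvec G x y + (mlen cs - dvec G x y) := by
        funext i
        have := hle i
        simp only [Pi.add_apply, Pi.sub_apply]
        omega
      rw [heq]
      have := hadd 0 (mlen cs - dvec G x y) (dvec G x y) (hzero _)
      simpa using this
  · intro i
    obtain ⟨u, v, huv⟩ := hedge i
    classical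
    let base : ∀ j, X j := fun j => (hedge j).choose
    refine ⟨Function.update base i u, Function.update base i v, ?_⟩
    funext j
    by_cases hji : j = i
    · subst hji
      simp only [dvec, Function.update_self, eVec, Pi.single_eq_same]
      exact SimpleGraph.dist_eq_one_iff_adj.2 huv
    · simp only [dvec, Function.update_of_ne hji, eVec, Pi.single_eq_of_ne hji,
        SimpleGraph.dist_self]
  · intro a b x y
    classical
    rw [← Fintype.card_subtype]
    have e1 : {z : ∀ i, X i // dvec G x z = a ∧ dvec G z y = b} ≃
        {z : ∀ i, X i // ∀ i, (G i).dist (x i) (z i) = a i ∧ (G i).dist (z i) (y i) = b i} := by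
      refine Equiv.subtypeEquivRight fun z => ?_
      constructor
      · rintro ⟨h1, h2⟩ i; exact ⟨congrFun h1 i, congrFun h2 i⟩
      · intro h; exact ⟨funext fun i => (h i).1, funext fun i => (h i).2⟩
    have e2 : {z : ∀ i, X i // ∀ i, (G i).dist (x i) (z i) = a i ∧ (G i).dist (z i) (y i) = b i}
        ≃ ∀ i, {zi : X i // (G i).dist (x i) zi = a i ∧ (G i).dist zi (y i) = b i} :=
      Equiv.subtypePiEquivPi (p := fun i zi => (G i).dist (x i) zi = a i ∧ (G i).dist zi (y i) = b i)
    rw [Fintype.card_congr (e1.trans e2), Fintype.card_pi]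
    refine Finset.prod_congr rfl fun i _ => ?_
    rw [Fintype.card_subtype]
    exact hdrg i (a i) (b i) (x i) (y i)
end
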